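/- Specializing the second Fu–Lascoux identity at t = 0: for n ≥ 0, ∑_{i=0}^n [n choose i]_q (-1)^{i-1} (x+1)(x+q)⋯(x+q^{i-1}) q^i = -(q;q)_n ∑_{i=0}^n (-xq)^i/(q;q)_i. -/

import Mathlib

open Finset

/-- The q-Pochhammer symbol `(a;q)_n = (1-a)(1-aq)⋯(1-aq^{n-1})`. -/
noncomputable def qPoch {K : Type*} [Field K] (q a : K) (n : ℕ) : K :=
  ∏ k ∈ Finset.range n, (1 - a * q ^ k)

/-- The Gaussian binomial coefficient `[n choose i]_q = (q;q)_n / ((q;q)_i (q;q)_{n-i})`. -/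
noncomputable def qBinom {K : Type*} [Field K] (q : K) (n i : ℕ) : K :=
  qPoch q q n / (qPoch q q i * qPoch q q (n - i))

/-- `wsum f m lo n = ∑_{lo ≤ i₁ ≤ i₂ ≤ ⋯ ≤ i_m ≤ n} f i₁ ⋯ f i_m`
(sum over weakly increasing `m`-tuples; the empty sum for `m = 0` is `1`). -/
noncomputable def wsum {K : Type*} [Field K] (f : ℕ → K) : ℕ → ℕ → ℕ → K
  | 0, _, _ => 1
  | m + 1, lo, n => ∑ j ∈ Finset.Icc lo n, f j * wsum f m j n

/-!
Write `P i = (x+1)(x+q)⋯(x+q^{i-1})`. The q-Pascal rule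
`[n+1, i+1] = q^{i+1} [n, i+1] + [n, i]` turns `∑ᵢ [n, i] (-1)^i P i` into `-x` times the same
sum for `n - 1`, so it equals `(-x)^n`. The other q-Pascal rule
`[n+1, i+1] = [n, i+1] + q^{n-i} [n, i]` gives the recursion
`S (n+1) = (1 - q^{n+1}) S n + x q^{n+1} (-x)^n` for the left-hand side `S n`, which the
right-hand side satisfies as well.
-/

theorem sum_range_succ_mul_of_pascal {R : Type*} [CommSemiring R] (c : ℕ → ℕ → R)
    (f g a : ℕ → R) (n : ℕ) (h_zero : c (n + 1) 0 = f 0 * c n 0)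
    (h_top : c (n + 1) (n + 1) = g n * c n n)
    (h_succ : ∀ i < n, c (n + 1) (i + 1) = f (i + 1) * c n (i + 1) + g i * c n i) :
    ∑ i ∈ range (n + 2), c (n + 1) i * a i
      = ∑ i ∈ range (n + 1), c n i * (f i * a i + g i * a (i + 1)) := by
  have h_split : ∑ i ∈ range n, c (n + 1) (i + 1) * a (i + 1)
      = ∑ i ∈ range n, c n (i + 1) * (f (i + 1) * a (i + 1))
        + ∑ i ∈ range n, c n i * (g i * a (i + 1)) := by
    rw [← sum_add_distrib]
    refine sum_congr rfl fun i hi => ?_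
    rw [h_succ i (mem_range.mp hi)]
    ring
  simp only [mul_add, sum_add_distrib]
  rw [sum_range_succ', sum_range_succ, h_split, h_zero, h_top,
    sum_range_succ' (fun i => c n i * (f i * a i)), sum_range_succ _ n]
  ring

section QBinom

variable {K : Type*} [Field K] {q : K}

@[simp]
theorem qPoch_zero (a : K) : qPoch q a 0 = 1 :=
  prod_range_zero _

theorem qPoch_succ (a : K) (m : ℕ) : qPoch q a (m + 1) = qPoch q a m * (1 - a * q ^ m) :=
  prod_range_succ _ m

variable (hq : ∀ k : ℕ, 0 < k → q ^ k ≠ 1)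
include hq

theorem one_sub_mul_pow_ne_zero (k : ℕ) : (1 : K) - q * q ^ k ≠ 0 := by
  rw [← pow_succ', sub_ne_zero]
  exact (hq (k + 1) k.succ_pos).symm

theorem qPoch_self_ne_zero (m : ℕ) : qPoch q q m ≠ 0 :=
  prod_ne_zero_iff.2 fun k _ => one_sub_mul_pow_ne_zero hq k

theorem qBinom_zero_right (n : ℕ) : qBinom q n 0 = 1 := by
  simp [qBinom, qPoch_self_ne_zero hq n]

theorem qBinom_self (n : ℕ) : qBinom q n n = 1 := by
  simp [qBinom, qPoch_self_ne_zero hq n]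

theorem qBinom_succ_succ_mul (n i : ℕ) :
    qBinom q (n + 1) (i + 1) * (1 - q * q ^ i) = qBinom q n i * (1 - q * q ^ n) := by
  have hP := qPoch_self_ne_zero hq
  simp only [qBinom, Nat.add_sub_add_right, qPoch_succ]
  field_simp [hP i, hP (n - i), one_sub_mul_pow_ne_zero hq i]

theorem qBinom_succ_right_mul {n i : ℕ} (hi : i < n) :
    qBinom q n (i + 1) * (1 - q * q ^ i) = qBinom q n i * (1 - q ^ (n - i)) := by
  have hP := qPoch_self_ne_zero hq
  obtain ⟨m, rfl⟩ := Nat.exists_eq_add_of_lt hi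
  simp only [qBinom, show i + m + 1 - i = m + 1 by omega, show i + m + 1 - (i + 1) = m by omega,
    qPoch_succ, pow_succ' q m]
  field_simp [hP i, hP m, one_sub_mul_pow_ne_zero hq i, one_sub_mul_pow_ne_zero hq m]

theorem qBinom_succ_succ {n i : ℕ} (hi : i < n) :
    qBinom q (n + 1) (i + 1) = q ^ (i + 1) * qBinom q n (i + 1) + qBinom q n i := by
  refine mul_right_cancel₀ (one_sub_mul_pow_ne_zero hq i) ?_
  have hpow : q ^ (i + 1) * q ^ (n - i) = q * q ^ n := by
    rw [← pow_add, ← pow_succ']; congr 1; omega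
  linear_combination qBinom_succ_succ_mul hq n i - q ^ (i + 1) * qBinom_succ_right_mul hq hi
    + qBinom q n i * hpow

theorem qBinom_succ_succ' {n i : ℕ} (hi : i < n) :
    qBinom q (n + 1) (i + 1) = qBinom q n (i + 1) + q ^ (n - i) * qBinom q n i := by
  refine mul_right_cancel₀ (one_sub_mul_pow_ne_zero hq i) ?_
  have hpow : q ^ (n - i) * (q * q ^ i) = q * q ^ n := by
    rw [← pow_succ', ← pow_add, ← pow_succ']; congr 1; omega
  linear_combination qBinom_succ_succ_mul hq n i - qBinom_succ_right_mul hq hi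
    + qBinom q n i * hpow

end QBinom

section FuLascoux

variable {K : Type*} [Field K] {q : K} (hq : ∀ k : ℕ, 0 < k → q ^ k ≠ 1) (x : K)
include hq

theorem sum_qBinom_mul_neg_one_pow_mul_prod (n : ℕ) :
    ∑ i ∈ range (n + 1), qBinom q n i * ((-1) ^ i * ∏ j ∈ range i, (x + q ^ j)) = (-x) ^ n := by
  induction n with
  | zero => simp [qBinom_zero_right hq]
  | succ n ih =>
    rw [sum_range_succ_mul_of_pascal (qBinom q) (q ^ ·) (fun _ => 1) _ n
      (by simp [qBinom_zero_right hq]) (by simp [qBinom_self hq])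
      fun i hi => by rw [qBinom_succ_succ hq hi, one_mul], pow_succ', ← ih, mul_sum]
    refine sum_congr rfl fun i _ => ?_
    rw [prod_range_succ]
    ring

theorem sum_qBinom_succ_mul_neg_neg_one_pow_mul_prod_mul_pow (n : ℕ) :
    ∑ i ∈ range (n + 2),
        qBinom q (n + 1) i * (-((-1 : K) ^ i) * (∏ j ∈ range i, (x + q ^ j)) * q ^ i)
      = (1 - q * q ^ n) * ∑ i ∈ range (n + 1),
          qBinom q n i * (-((-1 : K) ^ i) * (∏ j ∈ range i, (x + q ^ j)) * q ^ i)
        + x * (q * q ^ n) * (-x) ^ n := by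
  rw [sum_range_succ_mul_of_pascal (qBinom q) (fun _ => 1) (fun i => q ^ (n - i)) _ n
      (by simp [qBinom_zero_right hq]) (by simp [qBinom_self hq])
      fun i hi => by rw [qBinom_succ_succ' hq hi, one_mul],
    ← sum_qBinom_mul_neg_one_pow_mul_prod hq x n, mul_sum, mul_sum, ← sum_add_distrib]
  refine sum_congr rfl fun i hi => ?_
  have hpow : q ^ (n - i) * (q * q ^ i) = q * q ^ n := by
    rw [← pow_succ', ← pow_add, ← pow_succ']; congr 1; have := mem_range.mp hi; omega
  rw [prod_range_succ]
  linear_combination qBinom q n i * (-1) ^ i * (∏ j ∈ range i, (x + q ^ j)) * (x + q ^ i) * hpow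

end FuLascoux

/-- The second Fu–Lascoux identity specialized at `t = 0`. -/
theorem fu_lascoux_two_at_zero {K : Type*} [Field K] (q x : K)
    (hq : ∀ k : ℕ, 0 < k → q ^ k ≠ 1) (n : ℕ) :
    ∑ i ∈ range (n + 1), qBinom q n i * (-((-1 : K) ^ i)) *
        (∏ j ∈ range i, (x + q ^ j)) * q ^ i
      = -qPoch q q n * ∑ i ∈ range (n + 1), (-(x * q)) ^ i / qPoch q q i := by
  simp only [mul_assoc (qBinom q _ _)]
  induction n with
  | zero => simp [qBinom_zero_right hq]
  | succ n ih =>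
    have hcancel := mul_div_cancel₀ ((-(x * q)) ^ (n + 1)) (qPoch_self_ne_zero hq (n + 1))
    rw [sum_qBinom_succ_mul_neg_neg_one_pow_mul_prod_mul_pow hq, ih, sum_range_succ _ (n + 1),
      qPoch_succ]
    rw [qPoch_succ] at hcancel
    linear_combination hcancel
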